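/- (Utility loss bound with separate numerator and denominator noises) Let t_1 < … < t_M be event times with counts n_i > 0 and 0 ≤ d_i ≤ n_i, and let ε_{d,i} and ε_{n,i} be real noises with n_i + ε_{n,i} > 0 and 0 ≤ (d_i + ε_{d,i})/(n_i + ε_{n,i}) ≤ 1 for all i. Then for every t, |∏_{t_i ≤ t} (1 − d_i/n_i) − ∏_{t_i ≤ t} (1 − (d_i + ε_{d,i})/(n_i + ε_{n,i}))| ≤ ∑_{t_i ≤ t} |ε_{d,i}·n_i − d_i·ε_{n,i}| / (n_i·(n_i + ε_{n,i})). -/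

import Mathlib

/-! Both Kaplan–Meier products have all factors in `[0, 1]`, and for products of factors in the unit
ball replacing one factor moves the product by at most the change of that factor. Summing over
the factors leaves the per-factor differences, which equal `(ε_d n - d ε_n) / (n (n + ε_n))`. -/

open Finset

theorem Finset.norm_prod_sub_prod_le_sum_norm_sub {ι R : Type*} [NormedCommRing R]
    [NormOneClass R] (s : Finset ι) {f g : ι → R}
    (hf : ∀ i ∈ s, ‖f i‖ ≤ 1) (hg : ∀ i ∈ s, ‖g i‖ ≤ 1) :
    ‖∏ i ∈ s, f i - ∏ i ∈ s, g i‖ ≤ ∑ i ∈ s, ‖f i - g i‖ := by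
  induction s using Finset.cons_induction with
  | empty => simp
  | cons a s ha ih =>
    simp only [mem_cons, forall_eq_or_imp] at hf hg
    have hgs : ‖∏ i ∈ s, g i‖ ≤ 1 :=
      (norm_prod_le s g).trans (prod_le_one (fun _ _ ↦ norm_nonneg _) hg.2)
    rw [prod_cons, prod_cons, sum_cons,
      show f a * ∏ i ∈ s, f i - g a * ∏ i ∈ s, g i
        = f a * (∏ i ∈ s, f i - ∏ i ∈ s, g i) + (f a - g a) * ∏ i ∈ s, g i by ring]
    calc ‖f a * (∏ i ∈ s, f i - ∏ i ∈ s, g i) + (f a - g a) * ∏ i ∈ s, g i‖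
        ≤ ‖f a‖ * ‖∏ i ∈ s, f i - ∏ i ∈ s, g i‖ + ‖f a - g a‖ * ‖∏ i ∈ s, g i‖ :=
          (norm_add_le _ _).trans (add_le_add (norm_mul_le _ _) (norm_mul_le _ _))
      _ ≤ 1 * ∑ i ∈ s, ‖f i - g i‖ + ‖f a - g a‖ * 1 := by
          gcongr
          exacts [hf.1, ih hf.2 hg.2]
      _ = ‖f a - g a‖ + ∑ i ∈ s, ‖f i - g i‖ := by ring

theorem Real.norm_one_sub_le_one {x : ℝ} (h0 : 0 ≤ x) (h1 : x ≤ 1) : ‖1 - x‖ ≤ 1 := by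
  rw [Real.norm_eq_abs, abs_le]
  constructor <;> linarith

theorem one_sub_div_sub_one_sub_div_add_add {d n a b : ℝ} (hn : n ≠ 0) (hnb : n + b ≠ 0) :
    (1 - d / n) - (1 - (d + a) / (n + b)) = (a * n - d * b) / (n * (n + b)) := by
  field_simp
  ring

theorem utility_loss_bound_separate_noises_general (M : ℕ) (τ d n εd εn : Fin M → ℝ)
    (hn : ∀ i, 0 < n i) (hd0 : ∀ i, 0 ≤ d i)
    (hdn : ∀ i, d i ≤ n i) (hnεn : ∀ i, 0 < n i + εn i)
    (hratio0 : ∀ i, 0 ≤ (d i + εd i) / (n i + εn i))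
    (hratio1 : ∀ i, (d i + εd i) / (n i + εn i) ≤ 1) (t : ℝ) :
    |(∏ i ∈ univ.filter (fun i => τ i ≤ t), (1 - d i / n i))
        - ∏ i ∈ univ.filter (fun i => τ i ≤ t), (1 - (d i + εd i) / (n i + εn i))|
      ≤ ∑ i ∈ univ.filter (fun i => τ i ≤ t),
          |εd i * n i - d i * εn i| / (n i * (n i + εn i)) := by
  have hexact : ∀ i, ‖1 - d i / n i‖ ≤ 1 := fun i ↦
    Real.norm_one_sub_le_one (div_nonneg (hd0 i) (hn i).le)
      (div_le_one_of_le₀ (hdn i) (hn i).le)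
  have hnoisy : ∀ i, ‖1 - (d i + εd i) / (n i + εn i)‖ ≤ 1 := fun i ↦
    Real.norm_one_sub_le_one (hratio0 i) (hratio1 i)
  refine (Finset.norm_prod_sub_prod_le_sum_norm_sub _ (fun i _ ↦ hexact i) (fun i _ ↦ hnoisy i)).trans_eq
    (sum_congr rfl fun i _ ↦ ?_)
  rw [Real.norm_eq_abs, one_sub_div_sub_one_sub_div_add_add (hn i).ne' (hnεn i).ne', abs_div,
    abs_of_pos (mul_pos (hn i) (hnεn i))]

/-- Utility loss bound with separate numerator and denominator noises:
`|∏ (1 − d_i/n_i) − ∏ (1 − (d_i + ε_{d,i})/(n_i + ε_{n,i}))|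
  ≤ ∑ |ε_{d,i}·n_i − d_i·ε_{n,i}| / (n_i·(n_i + ε_{n,i}))`. -/
theorem utility_loss_bound_separate_noises (M : ℕ) (τ d n εd εn : Fin M → ℝ)
    (hτ : StrictMono τ) (hn : ∀ i, 0 < n i) (hd0 : ∀ i, 0 ≤ d i)
    (hdn : ∀ i, d i ≤ n i) (hnεn : ∀ i, 0 < n i + εn i)
    (hratio0 : ∀ i, 0 ≤ (d i + εd i) / (n i + εn i))
    (hratio1 : ∀ i, (d i + εd i) / (n i + εn i) ≤ 1) (t : ℝ) :
    |(∏ i ∈ univ.filter (fun i => τ i ≤ t), (1 - d i / n i))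
        - ∏ i ∈ univ.filter (fun i => τ i ≤ t), (1 - (d i + εd i) / (n i + εn i))|
      ≤ ∑ i ∈ univ.filter (fun i => τ i ≤ t),
          |εd i * n i - d i * εn i| / (n i * (n i + εn i)) :=
  utility_loss_bound_separate_noises_general M τ d n εd εn hn hd0 hdn hnεn hratio0 hratio1 t
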